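/- (Rate of convergence of the damped sparse-Newton method) Let P : ℝⁿ → ℝᵐ be continuously differentiable, u⁰ ∈ ℝⁿ, s = ‖P(u⁰)‖_∞ > 0, and let μ, L > 0 and ρ > 0 satisfy: ‖P'(u)ᵀh‖_∞ ≥ μ‖h‖₁ for all h ∈ ℝᵐ and all u ∈ B_ρ = {u : ‖u − u⁰‖₁ ≤ ρ}; ‖(P'(a) − P'(b))v‖_∞ ≤ L‖a−b‖₁‖v‖₁ for all a, b ∈ B_ρ, v ∈ ℝⁿ; and ρ ≥ (μ/L)·(k_max + 2H₀(v̄/2)), where k_max = max{0, ⌈2Ls/μ²⌉ − 2} and v̄ = Ls/μ² − k_max/2. Then every damped sparse-Newton sequence (uᵏ) from u⁰ converges to a point u* with P(u*) = 0, and for all k: if k < k_max then ‖uᵏ − u*‖₁ ≤ (μ/L)·(k_max − k + 2H₀(v̄/2)), while if k ≥ k_max then ‖uᵏ − u*‖₁ ≤ (2μ/L)·H_{k−k_max}(v̄/2), where H_j(δ) = Σ_{ℓ=j}^∞ δ^(2^ℓ). -/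

import Mathlib

open Filter Topology

/-- The ℓ1-norm on `ℝ^d`: `‖x‖₁ = Σᵢ |xᵢ|`. -/
noncomputable def l1Norm {d : ℕ} (x : Fin d → ℝ) : ℝ := ∑ i, |x i|

/-- The ℓ∞-norm on `ℝ^d`: `‖x‖_∞ = maxᵢ |xᵢ|`. -/
noncomputable def linfNorm {d : ℕ} (x : Fin d → ℝ) : ℝ := ⨆ i, |x i|

/-- `H_j(δ) = Σ_{ℓ=j}^∞ δ^(2^ℓ)`. -/
noncomputable def Hj (j : ℕ) (δ : ℝ) : ℝ := ∑' ℓ : ℕ, δ ^ (2 ^ (ℓ + j))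

/-- `H₀(δ) = Σ_{ℓ=0}^∞ δ^(2^ℓ)`. -/
noncomputable def H0 (δ : ℝ) : ℝ := Hj 0 δ

/-- The transpose of a continuous linear map `A : ℝⁿ → ℝᵐ` applied to `h ∈ ℝᵐ`:
`(Aᵀ h)ᵢ = Σⱼ Aⱼᵢ hⱼ` where `Aⱼᵢ = (A eᵢ)ⱼ`. -/
noncomputable def transposeApply {n m : ℕ} (A : (Fin n → ℝ) →L[ℝ] (Fin m → ℝ))
    (h : Fin m → ℝ) : Fin n → ℝ :=
  fun i => ∑ j, A (Pi.single i 1) j * h j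

section auxlemmas

lemma l1Norm_nonneg {d : ℕ} (x : Fin d → ℝ) : 0 ≤ l1Norm x :=
  Finset.sum_nonneg fun _ _ => abs_nonneg _

lemma l1Norm_zero {d : ℕ} : l1Norm (0 : Fin d → ℝ) = 0 := by
  simp [l1Norm]

lemma l1Norm_add {d : ℕ} (x y : Fin d → ℝ) : l1Norm (x + y) ≤ l1Norm x + l1Norm y := by
  have : l1Norm x + l1Norm y = ∑ i, (|x i| + |y i|) := by
    rw [l1Norm, l1Norm, ← Finset.sum_add_distrib]
  rw [this]
  exact Finset.sum_le_sum fun i _ => abs_add_le _ _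

lemma l1Norm_smul {d : ℕ} (c : ℝ) (x : Fin d → ℝ) : l1Norm (c • x) = |c| * l1Norm x := by
  simp [l1Norm, Finset.mul_sum, abs_mul]

lemma l1Norm_neg {d : ℕ} (x : Fin d → ℝ) : l1Norm (-x) = l1Norm x := by
  simp [l1Norm]

lemma abs_le_l1Norm {d : ℕ} (x : Fin d → ℝ) (i : Fin d) : |x i| ≤ l1Norm x :=
  Finset.single_le_sum (f := fun i => |x i|) (fun _ _ => abs_nonneg _) (Finset.mem_univ i)

lemma abs_le_linfNorm {d : ℕ} (x : Fin d → ℝ) (i : Fin d) : |x i| ≤ linfNorm x :=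
  le_ciSup (f := fun i => |x i|) (Set.Finite.bddAbove (Set.finite_range _)) i

lemma linfNorm_nonneg {d : ℕ} (x : Fin d → ℝ) : 0 ≤ linfNorm x :=
  Real.iSup_nonneg fun _ => abs_nonneg _

lemma linfNorm_le {d : ℕ} {x : Fin d → ℝ} {c : ℝ} (hc : 0 ≤ c) (h : ∀ i, |x i| ≤ c) :
    linfNorm x ≤ c := Real.iSup_le h hc

lemma linfNorm_zero {d : ℕ} : linfNorm (0 : Fin d → ℝ) = 0 :=
  le_antisymm (linfNorm_le le_rfl fun i => by simp) (linfNorm_nonneg _)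

lemma linfNorm_add {d : ℕ} (x y : Fin d → ℝ) :
    linfNorm (x + y) ≤ linfNorm x + linfNorm y := by
  refine linfNorm_le (add_nonneg (linfNorm_nonneg x) (linfNorm_nonneg y)) fun i => ?_
  calc |(x + y) i| ≤ |x i| + |y i| := abs_add_le _ _
    _ ≤ _ := add_le_add (abs_le_linfNorm x i) (abs_le_linfNorm y i)

lemma linfNorm_smul_le {d : ℕ} (c : ℝ) (x : Fin d → ℝ) :
    linfNorm (c • x) ≤ |c| * linfNorm x := by
  refine linfNorm_le (mul_nonneg (abs_nonneg c) (linfNorm_nonneg x)) fun i => ?_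
  calc |(c • x) i| = |c| * |x i| := by simp [abs_mul]
    _ ≤ |c| * linfNorm x :=
        mul_le_mul_of_nonneg_left (abs_le_linfNorm x i) (abs_nonneg c)

lemma norm_le_l1Norm {d : ℕ} (x : Fin d → ℝ) : ‖x‖ ≤ l1Norm x := by
  rw [pi_norm_le_iff_of_nonneg (l1Norm_nonneg x)]
  intro i
  simpa [Real.norm_eq_abs] using abs_le_l1Norm x i

lemma l1Norm_continuous {d : ℕ} : Continuous fun x : Fin d → ℝ => l1Norm x := by
  unfold l1Norm
  exact continuous_finset_sum _ fun i _ => (continuous_apply i).abs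

lemma clm_rep {m : ℕ} (f : (Fin m → ℝ) →L[ℝ] ℝ) (y : Fin m → ℝ) :
    f y = ∑ j, y j * f (Pi.single j 1) := by
  have hy : y = ∑ j, y j • (Pi.single j 1 : Fin m → ℝ) := by
    funext k
    simp [Pi.single_apply, Finset.sum_apply]
  calc f y = f (∑ j, y j • (Pi.single j 1 : Fin m → ℝ)) := by rw [← hy]
    _ = ∑ j, y j * f (Pi.single j 1) := by
        rw [map_sum]; simp [smul_eq_mul]

lemma pairing {n m : ℕ} (A : (Fin n → ℝ) →L[ℝ] (Fin m → ℝ))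
    (f : (Fin m → ℝ) →L[ℝ] ℝ) (i : Fin n) :
    f (A (Pi.single i 1)) = transposeApply A (fun j => f (Pi.single j 1)) i := by
  rw [clm_rep f (A (Pi.single i 1))]
  rfl

lemma minnorm_bound {n m : ℕ} (A : (Fin n → ℝ) →L[ℝ] (Fin m → ℝ)) (b : Fin m → ℝ)
    (μ : ℝ) (hμ : 0 < μ)
    (hA : ∀ h : Fin m → ℝ, μ * l1Norm h ≤ linfNorm (transposeApply A h))
    (w : Fin n → ℝ) (hw : A w = b)
    (hmin : ∀ v, A v = b → l1Norm w ≤ l1Norm v) :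
    l1Norm w ≤ linfNorm b / μ := by
  set r : ℝ := linfNorm b / μ with hr
  have hr0 : 0 ≤ r := div_nonneg (linfNorm_nonneg b) hμ.le
  suffices hb : b ∈ A '' {v | l1Norm v ≤ r} by
    obtain ⟨v, hv, hAv⟩ := hb
    exact le_trans (hmin v hAv) hv
  set S : Set (Fin n → ℝ) := {v | l1Norm v ≤ r} with hS
  have hSconv : Convex ℝ S := by
    intro x hx y hy a c ha hc hac
    have : l1Norm (a • x + c • y) ≤ a * l1Norm x + c * l1Norm y := by
      calc l1Norm (a • x + c • y) ≤ l1Norm (a • x) + l1Norm (c • y) := l1Norm_add _ _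
        _ = a * l1Norm x + c * l1Norm y := by
            rw [l1Norm_smul, l1Norm_smul, abs_of_nonneg ha, abs_of_nonneg hc]
    refine le_trans this ?_
    calc a * l1Norm x + c * l1Norm y ≤ a * r + c * r :=
          add_le_add (mul_le_mul_of_nonneg_left hx ha) (mul_le_mul_of_nonneg_left hy hc)
      _ = r := by rw [← add_mul, hac, one_mul]
  have hScpt : IsCompact S := by
    have hclosed : IsClosed S := isClosed_le l1Norm_continuous continuous_const
    have hbdd : Bornology.IsBounded S := by
      refine (Metric.isBounded_iff_subset_closedBall 0).mpr ⟨r, fun x hx => ?_⟩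
      simp only [Metric.mem_closedBall, dist_zero_right]
      exact le_trans (norm_le_l1Norm x) hx
    exact Metric.isCompact_of_isClosed_isBounded hclosed hbdd
  have hKconv : Convex ℝ (A '' S) := hSconv.linear_image A.toLinearMap
  have hKclosed : IsClosed (A '' S) := (hScpt.image A.continuous).isClosed
  by_contra hb
  obtain ⟨f, t, hft, htb⟩ := geometric_hahn_banach_closed_point hKconv hKclosed hb
  set h : Fin m → ℝ := fun j => f (Pi.single j 1) with hh
  have hfb : f b ≤ r * linfNorm (transposeApply A h) := by
    have h1 : f b ≤ linfNorm b * l1Norm h := by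
      rw [clm_rep f b]
      calc ∑ j, b j * h j ≤ ∑ j, |b j * h j| := Finset.sum_le_sum fun j _ => le_abs_self _
        _ = ∑ j, |b j| * |h j| := by simp [abs_mul]
        _ ≤ ∑ j, linfNorm b * |h j| := Finset.sum_le_sum fun j _ =>
            mul_le_mul_of_nonneg_right (abs_le_linfNorm b j) (abs_nonneg _)
        _ = linfNorm b * l1Norm h := by rw [l1Norm, Finset.mul_sum]
    have h2 : linfNorm b * l1Norm h ≤ r * linfNorm (transposeApply A h) := by
      have hμr : μ * r = linfNorm b := by
        rw [hr]; field_simp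
      calc linfNorm b * l1Norm h = r * (μ * l1Norm h) := by rw [← hμr]; ring
        _ ≤ r * linfNorm (transposeApply A h) :=
            mul_le_mul_of_nonneg_left (hA h) hr0
    linarith
  have h0S : (0 : Fin n → ℝ) ∈ S := by simp [hS, l1Norm_zero, hr0]
  have hf0 : f (A 0) < t := hft _ ⟨0, h0S, rfl⟩
  rcases Nat.eq_zero_or_pos n with hn | hn
  · have : linfNorm (transposeApply A h) = 0 := by
      have : IsEmpty (Fin n) := by rw [hn]; exact Fin.isEmpty'
      rw [linfNorm, iSup_of_empty']
      exact Real.sSup_empty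
    rw [this, mul_zero] at hfb
    simp only [map_zero] at hf0
    linarith
  · have : Nonempty (Fin n) := by
      rcases n with _ | n
      · omega
      · exact ⟨0⟩
    obtain ⟨i, hi⟩ := Finite.exists_max (fun i => |transposeApply A h i|)
    have hsup : linfNorm (transposeApply A h) = |transposeApply A h i| :=
      le_antisymm (Real.iSup_le (fun j => hi j) (abs_nonneg _)) (abs_le_linfNorm _ i)
    set c : ℝ := if 0 ≤ transposeApply A h i then r else -r with hc
    have hcs : |c| = r := by
      rw [hc]; split_ifs <;> simp [abs_of_nonneg hr0, abs_of_nonpos (neg_nonpos.mpr hr0)]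
    have hv0S : (c • (Pi.single i 1 : Fin n → ℝ)) ∈ S := by
      simp only [hS, Set.mem_setOf_eq, l1Norm_smul, hcs]
      have : l1Norm (Pi.single i 1 : Fin n → ℝ) = 1 := by
        simp only [l1Norm, Pi.single_apply]
        rw [Finset.sum_eq_single i] <;> simp +contextual
      rw [this, mul_one]
    have hfAv : f (A (c • (Pi.single i 1 : Fin n → ℝ))) = c * transposeApply A h i := by
      rw [map_smul, map_smul, smul_eq_mul, pairing]
    have hkey : r * |transposeApply A h i| = c * transposeApply A h i := by
      rw [hc]; split_ifs with hsign
      · rw [abs_of_nonneg hsign]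
      · rw [abs_of_neg (lt_of_not_ge hsign)]; ring
    have : f (A (c • (Pi.single i 1 : Fin n → ℝ))) < t := hft _ ⟨_, hv0S, rfl⟩
    rw [hfAv, ← hkey, ← hsup] at this
    linarith

lemma taylor_bound {n m : ℕ} (P : (Fin n → ℝ) → (Fin m → ℝ)) (hP : ContDiff ℝ 1 P)
    (L : ℝ) (hL : 0 ≤ L) (x y : Fin n → ℝ)
    (hlip : ∀ t ∈ Set.Icc (0:ℝ) 1,
      linfNorm ((fderiv ℝ P (x + t • (y - x)) - fderiv ℝ P x) (y - x))
        ≤ L * t * l1Norm (y - x) ^ 2) :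
    linfNorm (P y - P x - (fderiv ℝ P x) (y - x)) ≤ L / 2 * l1Norm (y - x) ^ 2 := by
  have hC2 : 0 ≤ l1Norm (y - x) ^ 2 := by positivity
  refine linfNorm_le (by positivity) fun i => ?_
  set d : Fin n → ℝ := y - x with hd
  set line : ℝ → (Fin n → ℝ) := fun t => x + t • d with hline
  have hdiff : Differentiable ℝ P := hP.differentiable one_ne_zero
  have hlinederiv : ∀ t : ℝ, HasDerivAt line d t := by
    intro t
    exact (((hasDerivAt_id t).smul_const d).const_add x).congr_deriv (one_smul ℝ d)
  set g : ℝ → ℝ := fun t => P (line t) i - t * ((fderiv ℝ P x) d i) with hg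
  set g' : ℝ → ℝ := fun t => ((fderiv ℝ P (line t) - fderiv ℝ P x) d) i with hg'
  have hgderiv : ∀ t : ℝ, HasDerivAt g (g' t) t := by
    intro t
    have h1 : HasDerivAt (fun t => P (line t)) ((fderiv ℝ P (line t)) d) t :=
      (hdiff (line t)).hasFDerivAt.comp_hasDerivAt t (hlinederiv t)
    have h2 : HasDerivAt (fun t => P (line t) i) ((fderiv ℝ P (line t)) d i) t :=
      (ContinuousLinearMap.proj (R := ℝ) (φ := fun _ : Fin m => ℝ) i).hasFDerivAt.comp_hasDerivAt
        t h1
    have h3 : HasDerivAt (fun t : ℝ => t * ((fderiv ℝ P x) d i)) ((fderiv ℝ P x) d i) t :=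
      hasDerivAt_mul_const _
    have := h2.sub h3
    exact this
  have hg'cont : Continuous g' := by
    have hfc : Continuous fun v => fderiv ℝ P v := hP.continuous_fderiv one_ne_zero
    have hlc : Continuous line := by
      apply continuous_const.add
      exact continuous_id.smul continuous_const
    have : Continuous fun t => (fderiv ℝ P (line t) - fderiv ℝ P x) d :=
      ((hfc.comp hlc).sub continuous_const).clm_apply continuous_const
    exact (continuous_apply i).comp this
  have hint : ∫ t in (0:ℝ)..1, g' t = g 1 - g 0 :=
    intervalIntegral.integral_eq_sub_of_hasDerivAt (fun t _ => hgderiv t)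
      ((hg'cont.intervalIntegrable 0 1))
  have habs : |∫ t in (0:ℝ)..1, g' t| ≤ L / 2 * l1Norm d ^ 2 := by
    have hb : ∀ t ∈ Set.uIoc (0:ℝ) 1, ‖g' t‖ ≤ L * t * l1Norm d ^ 2 := by
      intro t ht
      rw [Set.uIoc_of_le (by norm_num : (0:ℝ) ≤ 1)] at ht
      have ht' : t ∈ Set.Icc (0:ℝ) 1 := ⟨ht.1.le, ht.2⟩
      calc ‖g' t‖ = |((fderiv ℝ P (line t) - fderiv ℝ P x) d) i| := rfl
        _ ≤ linfNorm ((fderiv ℝ P (line t) - fderiv ℝ P x) d) := abs_le_linfNorm _ i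
        _ ≤ L * t * l1Norm d ^ 2 := hlip t ht'
    have hintc : IntervalIntegrable (fun t => L * t * l1Norm d ^ 2) MeasureTheory.volume 0 1 := by
      apply Continuous.intervalIntegrable
      continuity
    have := intervalIntegral.norm_integral_le_of_norm_le (μ := MeasureTheory.volume)
      (f := g') (g := fun t => L * t * l1Norm d ^ 2) zero_le_one ?_ hintc
    · refine le_trans this ?_
      have : ∫ t in (0:ℝ)..1, L * t * l1Norm d ^ 2 = L / 2 * l1Norm d ^ 2 := by
        have h1 : ∫ t in (0:ℝ)..1, L * t * l1Norm d ^ 2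
            = (L * l1Norm d ^ 2) * ∫ t in (0:ℝ)..1, t := by
          rw [← intervalIntegral.integral_const_mul]
          congr 1; funext t; ring
        rw [h1, integral_id]
        ring
      rw [this]
    · exact Filter.Eventually.of_forall fun t ht => hb t (by rw [Set.uIoc_of_le zero_le_one]; exact ht)
  have hgval : g 1 - g 0 = (P y - P x - (fderiv ℝ P x) d) i := by
    have h1 : line 1 = y := by simp [hline, hd]
    have h0 : line 0 = x := by simp [hline]
    simp [hg, h1, h0]; ring
  rw [hint, hgval] at habs
  exact habs

end auxlemmas

set_option maxHeartbeats 1000000 in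
/-- rate of convergence of the damped sparse-Newton method:
every damped sparse-Newton sequence from `u⁰` converges to a zero `u*` of `P`,
with `‖uᵏ − u*‖₁ ≤ (μ/L)(k_max − k + 2H₀(v̄/2))` for `k < k_max` and
`‖uᵏ − u*‖₁ ≤ (2μ/L)H_{k−k_max}(v̄/2)` for `k ≥ k_max`. -/
theorem statement11 {n m : ℕ} (P : (Fin n → ℝ) → (Fin m → ℝ)) (hP : ContDiff ℝ 1 P)
    (u0 : Fin n → ℝ) (s : ℝ) (hs : s = linfNorm (P u0)) (hspos : 0 < s)
    (ρ : ℝ) (hρ : 0 < ρ) (Bρ : Set (Fin n → ℝ)) (hB : Bρ = {v | l1Norm (v - u0) ≤ ρ})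
    (μ : ℝ) (hμ : 0 < μ)
    (hA' : ∀ v ∈ Bρ, ∀ h : Fin m → ℝ,
      μ * l1Norm h ≤ linfNorm (transposeApply (fderiv ℝ P v) h))
    (L : ℝ) (hL : 0 < L)
    (hLip : ∀ a ∈ Bρ, ∀ b ∈ Bρ, ∀ v : Fin n → ℝ,
      linfNorm ((fderiv ℝ P a - fderiv ℝ P b) v) ≤ L * l1Norm (a - b) * l1Norm v)
    (kmax : ℤ) (hkmax : kmax = max 0 (⌈2 * (L * s / μ ^ 2)⌉ - 2))
    (vbar : ℝ) (hvbar : vbar = L * s / μ ^ 2 - (kmax : ℝ) / 2)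
    (hρbig : ρ ≥ μ / L * ((kmax : ℝ) + 2 * H0 (vbar / 2)))
    -- a damped sparse-Newton sequence from `u0`:
    (u w : ℕ → Fin n → ℝ) (γ : ℕ → ℝ) (hu0 : u 0 = u0)
    (hw_eq : ∀ k, fderiv ℝ P (u k) (w k) = P (u k))
    (hw_min : ∀ k, ∀ v : Fin n → ℝ, fderiv ℝ P (u k) v = P (u k) →
      l1Norm (w k) ≤ l1Norm v)
    (hγ : ∀ k, γ k = if P (u k) = 0 then 1
      else min 1 (μ ^ 2 / (L * linfNorm (P (u k)))))
    (hstep : ∀ k, u (k + 1) = u k - γ k • w k) :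
    ∃ ustar : Fin n → ℝ, Tendsto u atTop (𝓝 ustar) ∧ P ustar = 0 ∧
      ∀ k : ℕ,
        ((k : ℤ) < kmax →
          l1Norm (u k - ustar) ≤ μ / L * (((kmax : ℝ) - k) + 2 * H0 (vbar / 2))) ∧
        (kmax ≤ (k : ℤ) →
          l1Norm (u k - ustar) ≤ 2 * μ / L * Hj ((k : ℤ) - kmax).toNat (vbar / 2)) := by
  have hμ2 : (0:ℝ) < μ ^ 2 := by positivity
  set t0 : ℝ := L * s / μ ^ 2 with ht0def
  have ht0 : 0 < t0 := by positivity
  set K : ℕ := kmax.toNat with hKdef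
  have hK0 : 0 ≤ kmax := by rw [hkmax]; exact le_max_left _ _
  have hKZ : (K : ℤ) = kmax := Int.toNat_of_nonneg hK0
  have hKR : (kmax : ℝ) = (K : ℝ) := by rw [← hKZ]; push_cast; ring
  have hvbarK : vbar = t0 - (K : ℝ) / 2 := by rw [hvbar, hKR]
  -- bounds on vbar
  have hvbar1 : vbar ≤ 1 := by
    rcases Nat.eq_zero_or_pos K with hKz | hKp
    · have hkm0 : kmax = 0 := by omega
      have : (⌈2 * t0⌉ : ℤ) - 2 ≤ 0 := by
        rw [hkmax] at hkm0
        omega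
      have h2 : (2 : ℝ) * t0 ≤ 2 := by
        refine le_trans (Int.le_ceil _) ?_
        exact_mod_cast (by omega : (⌈2 * t0⌉ : ℤ) ≤ 2)
      rw [hvbarK, hKz]
      push_cast
      linarith
    · have hkmp : 0 < kmax := by omega
      have hkm : kmax = ⌈2 * t0⌉ - 2 := by
        rw [hkmax]
        rw [hkmax] at hkmp
        omega
      have h1 : (2:ℝ) * t0 ≤ ((kmax : ℝ) + 2) := by
        have := Int.le_ceil (2 * t0)
        have hc : ((⌈2 * t0⌉ : ℤ) : ℝ) = (kmax : ℝ) + 2 := by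
          rw [hkm]; push_cast; ring
        linarith [hc ▸ this]
      rw [hvbarK, ← hKR]
      linarith
  have hvbar0 : 0 < vbar := by
    rcases Nat.eq_zero_or_pos K with hKz | hKp
    · rw [hvbarK, hKz]; push_cast; linarith
    · have hkmp : 0 < kmax := by omega
      have hkm : kmax = ⌈2 * t0⌉ - 2 := by
        rw [hkmax]; rw [hkmax] at hkmp; omega
      have h2 : ((kmax : ℝ) + 2) < 2 * t0 + 1 := by
        have := Int.ceil_lt_add_one (2 * t0)
        have hc : ((⌈2 * t0⌉ : ℤ) : ℝ) = (kmax : ℝ) + 2 := by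
          rw [hkm]; push_cast; ring
        linarith [hc ▸ this]
      rw [hvbarK, ← hKR]
      linarith
  have hvbar_half : K ≠ 0 → 1/2 ≤ vbar := by
    intro hKz
    have hkmp : 0 < kmax := by omega
    have hkm : kmax = ⌈2 * t0⌉ - 2 := by
      rw [hkmax]; rw [hkmax] at hkmp; omega
    have h2 : ((kmax : ℝ) + 2) < 2 * t0 + 1 := by
      have := Int.ceil_lt_add_one (2 * t0)
      have hc : ((⌈2 * t0⌉ : ℤ) : ℝ) = (kmax : ℝ) + 2 := by
        rw [hkm]; push_cast; ring
      linarith [hc ▸ this]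
    rw [hvbarK, ← hKR]
    linarith
  have hvh0 : 0 < vbar / 2 := by linarith
  have hvh1 : vbar / 2 ≤ 1 / 2 := by linarith
  -- the comparison sequences
  set τ : ℕ → ℝ := fun k => if k < K then t0 - (k : ℝ)/2 else 2 * (vbar/2)^(2^(k - K))
    with hτdef
  set δ : ℕ → ℝ := fun k => if k < K then μ/L else μ/L * τ k with hδdef
  set tt : ℕ → ℝ := fun k => L * linfNorm (P (u k)) / μ ^ 2 with httdef
  have htt0 : ∀ k, 0 ≤ tt k := fun k => by
    have := linfNorm_nonneg (P (u k)); positivity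
  have hlinf_tt : ∀ k, linfNorm (P (u k)) = μ ^ 2 * tt k / L := by
    intro k; rw [httdef]; field_simp
  have hτeq1 : ∀ k, k < K → τ k = t0 - (k : ℝ)/2 := by
    intro k hk
    rw [hτdef]
    simp [hk]
  have hτ1 : ∀ k, k < K → 1 ≤ τ k := by
    intro k hk
    have hv2 : 1/2 ≤ vbar := hvbar_half (by omega)
    have h1 : (k : ℝ) + 1 ≤ (K : ℝ) := by exact_mod_cast hk
    rw [hτeq1 k hk]
    linarith [hvbarK]
  have hτpos : ∀ k, 0 < τ k := by
    intro k
    rcases lt_or_ge k K with h | h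
    · exact lt_of_lt_of_le one_pos (hτ1 k h)
    · rw [hτdef]
      simp only [if_neg (by omega : ¬ k < K)]
      positivity
  have hτub : ∀ k, ¬(k < K) → τ k ≤ vbar := by
    intro k hk
    rw [hτdef]
    simp only [if_neg hk]
    have h1 : (vbar/2)^(2^(k-K)) ≤ (vbar/2)^1 :=
      pow_le_pow_of_le_one hvh0.le (by linarith) (Nat.one_le_two_pow)
    rw [pow_one] at h1
    linarith
  have hτrec1 : ∀ k, k < K → τ (k+1) = τ k - 1/2 := by
    intro k hk
    rw [hτdef]
    simp only
    rcases lt_or_ge (k+1) K with h | h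
    · rw [if_pos h, if_pos hk]
      push_cast; ring
    · have hk1 : k + 1 = K := by omega
      rw [if_neg (by omega), if_pos hk, hk1]
      simp only [Nat.sub_self, pow_zero, pow_one]
      have : (k : ℝ) = (K : ℝ) - 1 := by
        rw [← hk1]; push_cast; ring
      rw [this, hvbarK]
      ring
  have hτrec2 : ∀ k, ¬(k < K) → τ (k+1) = τ k ^ 2 / 2 := by
    intro k hk
    rw [hτdef]
    simp only [if_neg (by omega : ¬ k + 1 < K), if_neg hk]
    have h1 : k + 1 - K = (k - K) + 1 := by omega
    rw [h1, pow_succ, pow_mul]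
    ring
  have hτ0 : τ 0 = t0 := by
    rw [hτdef]
    simp only
    split_ifs with h
    · norm_num
    · have hK0' : K = 0 := by omega
      have hvt : vbar = t0 := by
        rw [hvbarK, hK0']
        push_cast
        ring
      rw [hK0']
      simp only [Nat.zero_sub, pow_zero, pow_one]
      linarith [hvt]
  have hμL : 0 < μ / L := div_pos hμ hL
  have hδpos : ∀ k, 0 < δ k := by
    intro k
    rw [hδdef]
    simp only
    split_ifs with h
    · exact hμL
    · exact mul_pos hμL (hτpos k)
  have hδshift : ∀ j, δ (j + K) = μ/L * (2 * (vbar/2)^(2^j)) := by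
    intro j
    rw [hδdef, hτdef]
    simp only [if_neg (by omega : ¬ j + K < K), Nat.add_sub_cancel]
  -- summability
  have hgeom : Summable (fun j : ℕ => ((1:ℝ)/2)^j) :=
    summable_geometric_of_lt_one (by norm_num) (by norm_num)
  have hpowb : ∀ j : ℕ, (vbar/2)^(2^j) ≤ (1/2)^j := by
    intro j
    calc (vbar/2)^(2^j) ≤ ((1:ℝ)/2)^(2^j) := pow_le_pow_left₀ hvh0.le hvh1 _
      _ ≤ (1/2)^j := pow_le_pow_of_le_one (by norm_num) (by norm_num) (Nat.le_of_lt (Nat.lt_two_pow_self (n := j)))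
  have hHsum : ∀ J : ℕ, Summable (fun ℓ : ℕ => (vbar/2)^(2^(ℓ + J))) := by
    intro J
    refine Summable.of_nonneg_of_le (fun ℓ => by positivity) (fun ℓ => ?_) hgeom
    calc (vbar/2)^(2^(ℓ+J)) ≤ ((1:ℝ)/2)^(2^(ℓ+J)) := pow_le_pow_left₀ hvh0.le hvh1 _
      _ ≤ (1/2)^ℓ := pow_le_pow_of_le_one (by norm_num) (by norm_num)
          (le_trans (Nat.le_of_lt (Nat.lt_two_pow_self (n := ℓ))) (Nat.pow_le_pow_right (by norm_num) (by omega)))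
  have hηsum : Summable (fun j : ℕ => δ (j + K)) := by
    refine Summable.of_nonneg_of_le (fun j => (hδpos _).le) (fun j => ?_)
      ((hHsum 0).mul_left (μ/L * 2))
    rw [hδshift j]
    have : (vbar/2)^(2^j) = (vbar/2)^(2^(j+0)) := by norm_num
    rw [this]
    ring_nf
    exact le_of_eq (by ring)
  have hδsum : Summable δ := by
    rw [← summable_nat_add_iff K]
    exact hηsum
  have hδtot : ∑' j, δ j = μ/L * ((K:ℝ) + 2 * H0 (vbar/2)) := by
    rw [← Summable.sum_add_tsum_nat_add K hδsum]
    have h1 : ∑ j ∈ Finset.range K, δ j = (K:ℝ) * (μ/L) := by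
      have he : ∀ j ∈ Finset.range K, δ j = μ/L := by
        intro j hj
        rw [hδdef]
        simp only
        rw [if_pos (Finset.mem_range.mp hj)]
      rw [Finset.sum_congr rfl he, Finset.sum_const, Finset.card_range, nsmul_eq_mul]
    have h2 : ∑' j, δ (j + K) = μ/L * (2 * H0 (vbar/2)) := by
      rw [tsum_congr hδshift, tsum_mul_left]
      congr 1
      have hH : H0 (vbar/2) = ∑' ℓ : ℕ, (vbar/2)^(2^ℓ) := by
        unfold H0 Hj
        exact tsum_congr fun ℓ => by norm_num
      rw [hH, ← tsum_mul_left]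
    rw [h1, h2]
    ring
  have hSρ : ∀ k, (∑ j ∈ Finset.range k, δ j) ≤ ρ := by
    intro k
    refine le_trans (Summable.sum_le_tsum _ (fun j _ => (hδpos j).le) hδsum) ?_
    rw [hδtot]
    rw [hKR] at hρbig
    linarith
  have memB : ∀ v : Fin n → ℝ, l1Norm (v - u0) ≤ ρ → v ∈ Bρ := by
    intro v hv
    rw [hB]
    exact hv
  have hPtt : ∀ k, P (u k) ≠ 0 → 0 < tt k := by
    intro k hPk
    have : ∃ i, P (u k) i ≠ 0 := by
      by_contra hc
      push_neg at hc
      exact hPk (funext hc)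
    obtain ⟨i, hi⟩ := this
    have h1 : 0 < |P (u k) i| := abs_pos.mpr hi
    have h2 : 0 < linfNorm (P (u k)) := lt_of_lt_of_le h1 (abs_le_linfNorm _ i)
    rw [httdef]
    positivity
  have httz : ∀ k, P (u k) = 0 → tt k = 0 := by
    intro k hPk
    rw [httdef]
    simp only [hPk, linfNorm_zero, mul_zero, zero_div]
  have hγeq : ∀ k, P (u k) ≠ 0 → γ k = min 1 (1 / tt k) := by
    intro k hPk
    rw [hγ k, if_neg hPk]
    congr 1
    rw [hlinf_tt k]
    rw [httdef] at *
    field_simp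
  have hγfacts : ∀ k, 0 ≤ γ k ∧ γ k ≤ 1 ∧ γ k * tt k ≤ min (tt k) 1 := by
    intro k
    by_cases hPk : P (u k) = 0
    · rw [hγ k, if_pos hPk]
      refine ⟨zero_le_one, le_rfl, ?_⟩
      rw [httz k hPk]
      norm_num
    · have htk : 0 < tt k := hPtt k hPk
      rw [hγeq k hPk]
      refine ⟨le_min zero_le_one (by positivity), min_le_left _ _, ?_⟩
      refine le_min ?_ ?_
      · exact mul_le_of_le_one_left (htt0 k) (min_le_left _ _)
      · calc min 1 (1 / tt k) * tt k ≤ (1 / tt k) * tt k :=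
            mul_le_mul_of_nonneg_right (min_le_right _ _) (htt0 k)
          _ = 1 := by field_simp
  have hwbound : ∀ k, u k ∈ Bρ → l1Norm (w k) ≤ μ * tt k / L := by
    intro k hk
    have h1 : l1Norm (w k) ≤ linfNorm (P (u k)) / μ :=
      minnorm_bound (fderiv ℝ P (u k)) (P (u k)) μ hμ (hA' _ hk) (w k) (hw_eq k) (hw_min k)
    rw [hlinf_tt k] at h1
    refine le_trans h1 (le_of_eq ?_)
    field_simp
  have hstepb : ∀ k, u k ∈ Bρ → l1Norm (u (k+1) - u k) ≤ μ/L * (γ k * tt k) := by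
    intro k hk
    have h1 : u (k+1) - u k = -(γ k • w k) := by
      rw [hstep k]
      abel
    rw [h1, l1Norm_neg, l1Norm_smul, abs_of_nonneg (hγfacts k).1]
    calc γ k * l1Norm (w k) ≤ γ k * (μ * tt k / L) :=
        mul_le_mul_of_nonneg_left (hwbound k hk) (hγfacts k).1
      _ = μ/L * (γ k * tt k) := by ring
  have hkey : ∀ k, u k ∈ Bρ → l1Norm (u (k+1) - u k) ≤ μ/L * min (tt k) 1 := by
    intro k hk
    refine le_trans (hstepb k hk) ?_
    exact mul_le_mul_of_nonneg_left (hγfacts k).2.2 hμL.le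
  have hminδ : ∀ k, tt k ≤ τ k → μ/L * min (tt k) 1 ≤ δ k := by
    intro k hb
    rw [hδdef]
    simp only
    split_ifs with h
    · calc μ/L * min (tt k) 1 ≤ μ/L * 1 :=
          mul_le_mul_of_nonneg_left (min_le_right _ _) hμL.le
        _ = μ/L := mul_one _
    · exact mul_le_mul_of_nonneg_left (le_trans (min_le_left _ _) hb) hμL.le
  have hmain : ∀ k, l1Norm (u k - u0) ≤ (∑ j ∈ Finset.range k, δ j) ∧ tt k ≤ τ k := by
    intro k
    induction k with
    | zero =>
      constructor
      · rw [hu0, sub_self, l1Norm_zero, Finset.range_zero, Finset.sum_empty]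
      · have h0 : tt 0 = t0 := by
          rw [httdef]
          simp only
          rw [hu0, ← hs, ht0def]
        rw [h0, hτ0]
    | succ k ih =>
      obtain ⟨ha, hb⟩ := ih
      have hukB : u k ∈ Bρ := memB _ (le_trans ha (hSρ k))
      have hstepδ : l1Norm (u (k+1) - u k) ≤ δ k := le_trans (hkey k hukB) (hminδ k hb)
      have ha' : l1Norm (u (k+1) - u0) ≤ ∑ j ∈ Finset.range (k+1), δ j := by
        have htri : l1Norm (u (k+1) - u0) ≤ l1Norm (u (k+1) - u k) + l1Norm (u k - u0) := by
          have hh : u (k+1) - u0 = (u (k+1) - u k) + (u k - u0) := by abel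
          rw [hh]
          exact l1Norm_add _ _
        rw [Finset.sum_range_succ]
        linarith
      refine ⟨ha', ?_⟩
      have hukρ : l1Norm (u k - u0) ≤ ρ := le_trans ha (hSρ k)
      have huk1ρ : l1Norm (u (k+1) - u0) ≤ ρ := le_trans ha' (hSρ (k+1))
      have hlip : ∀ θ ∈ Set.Icc (0:ℝ) 1,
          linfNorm ((fderiv ℝ P (u k + θ • (u (k+1) - u k)) - fderiv ℝ P (u k))
            (u (k+1) - u k)) ≤ L * θ * l1Norm (u (k+1) - u k) ^ 2 := by
        intro θ hθ
        obtain ⟨hθ0, hθ1⟩ := hθ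
        have hmid : (u k + θ • (u (k+1) - u k)) ∈ Bρ := by
          apply memB
          have heq : u k + θ • (u (k+1) - u k) - u0
              = (1 - θ) • (u k - u0) + θ • (u (k+1) - u0) := by
            funext i
            simp only [Pi.add_apply, Pi.sub_apply, Pi.smul_apply, smul_eq_mul]
            ring
          rw [heq]
          calc l1Norm ((1-θ) • (u k - u0) + θ • (u (k+1) - u0))
              ≤ l1Norm ((1-θ) • (u k - u0)) + l1Norm (θ • (u (k+1) - u0)) := l1Norm_add _ _
            _ = (1-θ) * l1Norm (u k - u0) + θ * l1Norm (u (k+1) - u0) := by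
                rw [l1Norm_smul, l1Norm_smul, abs_of_nonneg (by linarith : (0:ℝ) ≤ 1 - θ),
                  abs_of_nonneg hθ0]
            _ ≤ (1-θ) * ρ + θ * ρ :=
                add_le_add (mul_le_mul_of_nonneg_left hukρ (by linarith))
                  (mul_le_mul_of_nonneg_left huk1ρ hθ0)
            _ = ρ := by ring
        refine le_trans (hLip _ hmid _ hukB (u (k+1) - u k)) (le_of_eq ?_)
        have hms : u k + θ • (u (k+1) - u k) - u k = θ • (u (k+1) - u k) := by
          abel
        rw [hms, l1Norm_smul, abs_of_nonneg hθ0]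
        ring
      have htay := taylor_bound P hP L hL.le (u k) (u (k+1)) hlip
      have hAyx : (fderiv ℝ P (u k)) (u (k+1) - u k) = -(γ k • P (u k)) := by
        have h1 : u (k+1) - u k = -(γ k • w k) := by rw [hstep k]; abel
        rw [h1, map_neg, map_smul, hw_eq k]
      have hPdecomp : P (u (k+1)) - P (u k) - (fderiv ℝ P (u k)) (u (k+1) - u k)
          = P (u (k+1)) - (1 - γ k) • P (u k) := by
        rw [hAyx]
        funext i
        simp only [Pi.sub_apply, Pi.neg_apply, Pi.smul_apply, smul_eq_mul]
        ring
      have h1γ : 0 ≤ 1 - γ k := by linarith [(hγfacts k).2.1]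
      have hlinfy : linfNorm (P (u (k+1)))
          ≤ (1 - γ k) * linfNorm (P (u k)) + L/2 * l1Norm (u (k+1) - u k) ^ 2 := by
        have hsplit : P (u (k+1))
            = (P (u (k+1)) - (1 - γ k) • P (u k)) + (1 - γ k) • P (u k) := by abel
        calc linfNorm (P (u (k+1)))
            ≤ linfNorm (P (u (k+1)) - (1 - γ k) • P (u k))
              + linfNorm ((1 - γ k) • P (u k)) := by
              nth_rewrite 1 [hsplit]
              exact linfNorm_add _ _
          _ ≤ L/2 * l1Norm (u (k+1) - u k) ^ 2 + (1 - γ k) * linfNorm (P (u k)) := by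
              refine add_le_add ?_ ?_
              · rw [← hPdecomp]
                exact htay
              · refine le_trans (linfNorm_smul_le _ _) (le_of_eq ?_)
                rw [abs_of_nonneg h1γ]
          _ = (1 - γ k) * linfNorm (P (u k)) + L/2 * l1Norm (u (k+1) - u k) ^ 2 := by ring
      have hrec : tt (k+1) ≤ (1 - γ k) * tt k + (γ k * tt k)^2 / 2 := by
        have hs2 : l1Norm (u (k+1) - u k)^2 ≤ (μ/L * (γ k * tt k))^2 :=
          pow_le_pow_left₀ (l1Norm_nonneg _) (hstepb k hukB) 2
        have h3 : linfNorm (P (u (k+1)))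
            ≤ (1 - γ k) * (μ^2 * tt k / L) + L/2 * (μ/L * (γ k * tt k))^2 := by
          rw [← hlinf_tt k]
          refine le_trans hlinfy (add_le_add le_rfl ?_)
          exact mul_le_mul_of_nonneg_left hs2 (by positivity)
        have h4 : tt (k+1) = L * linfNorm (P (u (k+1))) / μ^2 := by rw [httdef]
        rw [h4]
        calc L * linfNorm (P (u (k+1))) / μ^2
            ≤ L * ((1 - γ k) * (μ^2 * tt k / L) + L/2 * (μ/L * (γ k * tt k))^2) / μ^2 := by
              gcongr
          _ = (1 - γ k) * tt k + (γ k * tt k)^2/2 := by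
              field_simp
      by_cases hkK : k < K
      · rw [hτrec1 k hkK]
        have hτk : 1 ≤ τ k := hτ1 k hkK
        by_cases h1t : 1 ≤ tt k
        · have hPk : P (u k) ≠ 0 := by
            intro h0
            rw [httz k h0] at h1t
            linarith
          have hγk : γ k = 1 / tt k := by
            rw [hγeq k hPk, min_eq_right]
            rw [div_le_one (by linarith)]
            exact h1t
          have htne : tt k ≠ 0 := by linarith
          have h5 : (1 - γ k) * tt k + (γ k * tt k)^2/2 = tt k - 1/2 := by
            rw [hγk]
            field_simp
            ring
          linarith [hrec]
        · push_neg at h1t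
          have hval : (1 - γ k) * tt k + (γ k * tt k)^2/2 ≤ 1/2 := by
            by_cases hPk : P (u k) = 0
            · rw [httz k hPk]
              norm_num
            · have htk : 0 < tt k := hPtt k hPk
              have hγk : γ k = 1 := by
                rw [hγeq k hPk, min_eq_left]
                rw [le_div_iff₀ htk]
                linarith
              rw [hγk]
              have h6 : tt k ^ 2 ≤ 1 := by nlinarith
              have h7 : (1 - 1) * tt k + (1 * tt k)^2/2 = tt k^2/2 := by ring
              rw [h7]
              linarith
          linarith [hrec]
      · rw [hτrec2 k hkK]
        have hτk1 : τ k ≤ 1 := le_trans (hτub k hkK) hvbar1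
        by_cases hPk : P (u k) = 0
        · have h5 : (1 - γ k) * tt k + (γ k * tt k)^2/2 = 0 := by
            rw [httz k hPk]
            ring
          have hp : 0 < τ k ^2/2 := div_pos (pow_pos (hτpos k) 2) two_pos
          linarith [hrec]
        · have htk : 0 < tt k := hPtt k hPk
          have htk1 : tt k ≤ 1 := le_trans hb hτk1
          have hγk : γ k = 1 := by
            rw [hγeq k hPk, min_eq_left]
            rw [le_div_iff₀ htk]
            linarith
          have h5 : (1 - γ k) * tt k + (γ k * tt k)^2/2 = tt k^2/2 := by
            rw [hγk]
            ring
          have h6 : tt k^2 ≤ τ k^2 := pow_le_pow_left₀ (htt0 k) hb 2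
          linarith [hrec]
  have htailK : ∑' j, δ (j + K) = μ/L * (2 * H0 (vbar/2)) := by
    rw [tsum_congr hδshift, tsum_mul_left]
    congr 1
    have hH : H0 (vbar/2) = ∑' ℓ : ℕ, (vbar/2)^(2^ℓ) := by
      unfold H0 Hj
      exact tsum_congr fun ℓ => by norm_num
    rw [hH, ← tsum_mul_left]
  have hstepall : ∀ k, l1Norm (u (k+1) - u k) ≤ δ k := fun k =>
    le_trans (hkey k (memB _ (le_trans (hmain k).1 (hSρ k)))) (hminδ k (hmain k).2)
  have hdist : ∀ k, dist (u k) (u (k+1)) ≤ δ k := by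
    intro k
    rw [dist_eq_norm]
    refine le_trans (norm_le_l1Norm _) ?_
    rw [show u k - u (k+1) = -(u (k+1) - u k) by abel, l1Norm_neg]
    exact hstepall k
  obtain ⟨ustar, hustar⟩ := cauchySeq_tendsto_of_complete
    (cauchySeq_of_dist_le_of_summable δ hdist hδsum)
  have hτtend : Tendsto τ atTop (𝓝 0) := by
    rw [← tendsto_add_atTop_iff_nat K]
    refine squeeze_zero (fun j => (hτpos _).le) (fun j => ?_)
      ((tendsto_pow_atTop_nhds_zero_of_lt_one (by norm_num : (0:ℝ) ≤ 1/2)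
        (by norm_num : (1:ℝ)/2 < 1)).const_mul 2 |>.mono_right (by simp))
    have hτj : τ (j + K) = 2*(vbar/2)^(2^j) := by
      rw [hτdef]
      simp only [if_neg (by omega : ¬ j + K < K), Nat.add_sub_cancel]
    rw [hτj]
    exact mul_le_mul_of_nonneg_left (hpowb j) (by norm_num)
  have hPzero : P ustar = 0 := by
    funext i
    have hub : ∀ k, |P (u k) i| ≤ μ^2/L * τ k := by
      intro k
      refine le_trans (abs_le_linfNorm _ i) ?_
      rw [hlinf_tt k]
      have h1 := (hmain k).2
      calc μ^2 * tt k / L ≤ μ^2 * τ k / L := by gcongr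
        _ = μ^2/L * τ k := by ring
    have h2 : Tendsto (fun k => μ^2/L * τ k) atTop (𝓝 0) := by
      have := hτtend.const_mul (μ^2/L)
      rwa [mul_zero] at this
    have h3 : Tendsto (fun k => |P (u k) i|) atTop (𝓝 |P ustar i|) := by
      have hPl : Tendsto (fun k => P (u k) i) atTop (𝓝 (P ustar i)) :=
        ((continuous_apply i).tendsto _).comp ((hP.continuous.tendsto ustar).comp hustar)
      exact hPl.abs
    have h4 : |P ustar i| ≤ 0 := le_of_tendsto_of_tendsto' h3 h2 hub
    have h5 : |P ustar i| = 0 := le_antisymm h4 (abs_nonneg _)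
    simpa using abs_eq_zero.mp h5
  refine ⟨ustar, hustar, hPzero, ?_⟩
  have htel : ∀ k p, l1Norm (u k - u (p + k)) ≤ ∑ j ∈ Finset.range p, δ (j + k) := by
    intro k p
    induction p with
    | zero => simp [sub_self, l1Norm_zero]
    | succ p ih =>
      have h1 : u k - u (p + 1 + k) = (u k - u (p + k)) + (u (p + k) - u ((p + k) + 1)) := by
        have h2 : p + 1 + k = (p + k) + 1 := by omega
        rw [h2]
        abel
      calc l1Norm (u k - u (p + 1 + k))
          ≤ l1Norm (u k - u (p + k)) + l1Norm (u (p + k) - u ((p + k) + 1)) := by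
            rw [h1]
            exact l1Norm_add _ _
        _ ≤ (∑ j ∈ Finset.range p, δ (j + k)) + δ (p + k) := by
            refine add_le_add ih ?_
            rw [show u (p + k) - u ((p + k) + 1) = -(u ((p + k) + 1) - u (p + k)) by abel,
              l1Norm_neg]
            exact hstepall (p + k)
        _ = ∑ j ∈ Finset.range (p + 1), δ (j + k) := by
            rw [Finset.sum_range_succ]
  have hsumk : ∀ k, Summable (fun j => δ (j + k)) := fun k => (summable_nat_add_iff k).2 hδsum
  have htail : ∀ k, l1Norm (u k - ustar) ≤ ∑' j, δ (j + k) := by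
    intro k
    have hlim2 : Tendsto (fun p => l1Norm (u k - u (p + k))) atTop
        (𝓝 (l1Norm (u k - ustar))) := by
      have hc : Continuous fun x : Fin n → ℝ => l1Norm (u k - x) :=
        l1Norm_continuous.comp (continuous_const.sub continuous_id)
      exact (hc.tendsto _).comp (hustar.comp (tendsto_add_atTop_nat k))
    refine le_of_tendsto hlim2 (Filter.Eventually.of_forall fun p => ?_)
    exact le_trans (htel k p) (Summable.sum_le_tsum _ (fun j _ => (hδpos _).le) (hsumk k))
  intro k
  constructor
  · intro hkK'
    have hkK : k < K := by omega
    have hsplit : ∑' j, δ (j + k)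
        = (∑ j ∈ Finset.range (K - k), δ (j + k)) + ∑' j, δ (j + (K - k) + k) :=
      (Summable.sum_add_tsum_nat_add (K - k) (hsumk k)).symm
    have hfin : ∑ j ∈ Finset.range (K - k), δ (j + k) = ((K - k : ℕ) : ℝ) * (μ/L) := by
      have he : ∀ j ∈ Finset.range (K - k), δ (j + k) = μ/L := by
        intro j hj
        have hjk : j + k < K := by
          have := Finset.mem_range.mp hj
          omega
        rw [hδdef]
        simp only
        rw [if_pos hjk]
      rw [Finset.sum_congr rfl he, Finset.sum_const, Finset.card_range, nsmul_eq_mul]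
    have htail2 : ∑' j, δ (j + (K - k) + k) = μ/L * (2 * H0 (vbar/2)) := by
      have he : ∀ j : ℕ, δ (j + (K - k) + k) = δ (j + K) := fun j => by
        congr 1
        omega
      rw [tsum_congr he, htailK]
    calc l1Norm (u k - ustar) ≤ ∑' j, δ (j + k) := htail k
      _ = ((K - k : ℕ) : ℝ) * (μ/L) + μ/L * (2 * H0 (vbar/2)) := by
          rw [hsplit, hfin, htail2]
      _ = μ / L * (((kmax : ℝ) - k) + 2 * H0 (vbar / 2)) := by
          rw [hKR]
          have hc : ((K - k : ℕ) : ℝ) = (K : ℝ) - (k : ℝ) := by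
            push_cast [Nat.cast_sub hkK.le]
            ring
          rw [hc]
          ring
  · intro hge'
    have hge : K ≤ k := by omega
    have hT : ((k:ℤ) - kmax).toNat = k - K := by omega
    have he : ∀ j : ℕ, δ (j + k) = (μ/L * 2) * (vbar/2)^(2^(j + (k - K))) := by
      intro j
      have h1 : j + k = (j + (k - K)) + K := by omega
      rw [h1, hδshift]
      ring
    calc l1Norm (u k - ustar) ≤ ∑' j, δ (j + k) := htail k
      _ = (μ/L * 2) * ∑' j, (vbar/2)^(2^(j + (k - K))) := by
          rw [tsum_congr he, tsum_mul_left]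
      _ = 2 * μ / L * Hj ((k:ℤ) - kmax).toNat (vbar/2) := by
          rw [hT]
          have hHj : Hj (k - K) (vbar/2) = ∑' j : ℕ, (vbar/2)^(2^(j + (k - K))) := rfl
          rw [hHj]
          ring
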